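/- arXiv:1803.09110 — 2 statements merged into one kernel-verified Lean document; each statement's English description precedes it below -/
import Mathlib

section
/- Let a_{j,k} ∈ ℂ (1 ≤ j < k ≤ n+1) and let F = F(a) be the associated filtration of V = ℂ^{n+1}. Then −N_0 + N_1 satisfies Griffiths transversality with respect to F if and only if a_{1,k} = a_{l−k+1,l} for all 2 ≤ k < l ≤ n+1. -/
open Complex

noncomputable section

/-- The nilpotent endomorphism `N₀` (as a matrix, with 0-based indices:
Lean index `j` corresponds to the paper's index `j+1`):
`N₀ e_j = e_{j-1}` for `1 ≤ j ≤ n-1` (paper: `2 ≤ j ≤ n`), `N₀ e_0 = N₀ e_n = 0`. -/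
def N0 (n : ℕ) : Matrix (Fin (n + 1)) (Fin (n + 1)) ℂ :=
  fun i j => if (i : ℕ) + 1 = (j : ℕ) ∧ (j : ℕ) < n then 1 else 0

/-- The vector `w_k = e_k + ∑_{j<k} a_{j,k} e_j`, where `a` uses the paper's
1-based indices (so `a (i+1) (k+1)` for Lean indices `i < k`). -/
def w (n : ℕ) (a : ℕ → ℕ → ℂ) (k : Fin (n + 1)) : Fin (n + 1) → ℂ :=
  fun i => if i = k then 1 else if (i : ℕ) < (k : ℕ) then a ((i : ℕ) + 1) ((k : ℕ) + 1) else 0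

/-- The decreasing filtration `F = F(a)`: `F^p = 0` for `p ≥ 1`, and for `p ≤ 0`,
`F^p` is spanned by the `w_k` with (paper) `n+1+p ≤ k ≤ n+1`. -/
def Filt (n : ℕ) (a : ℕ → ℕ → ℂ) : ℤ → Submodule ℂ (Fin (n + 1) → ℂ) :=
  fun p => if 1 ≤ p then ⊥
    else Submodule.span ℂ {v | ∃ k : Fin (n + 1), (n : ℤ) + p ≤ (k : ℕ) ∧ v = w n a k}

/-- `N` satisfies Griffiths transversality with respect to `F(a)`: `N F^p ⊆ F^{p-1}`. -/
def GriffithsTransversal (n : ℕ) (N : Matrix (Fin (n + 1)) (Fin (n + 1)) ℂ)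
    (a : ℕ → ℕ → ℂ) : Prop :=
  ∀ p : ℤ, ∀ v ∈ Filt n a p, N.mulVec v ∈ Filt n a (p - 1)


/-- The nilpotent endomorphism `N₁` (0-based indices): `N₁ e_n = -e_{n-1}`
(paper: `N₁ e_{n+1} = -e_n`), and `N₁ e_j = 0` otherwise. -/
def N1 (n : ℕ) : Matrix (Fin (n + 1)) (Fin (n + 1)) ℂ :=
  fun i j => if (i : ℕ) + 1 = n ∧ (j : ℕ) = n then -1 else 0

lemma w_apply (n : ℕ) (a : ℕ → ℕ → ℂ) (k i : Fin (n + 1)) :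
    w n a k i = if (i : ℕ) = (k : ℕ) then 1
      else if (i : ℕ) < (k : ℕ) then a ((i : ℕ) + 1) ((k : ℕ) + 1) else 0 := by
  rw [w]
  congr 1
  simp [Fin.ext_iff]

lemma Nentry (n : ℕ) (i j : Fin (n + 1)) :
    (-N0 n + N1 n) i j = if (i : ℕ) + 1 = (j : ℕ) then -1 else 0 := by
  have hj := j.is_lt
  have hi := i.is_lt
  simp only [Matrix.add_apply, Matrix.neg_apply, N0, N1]
  split_ifs <;> first | omega | norm_num

lemma Nmul (n : ℕ) (v : Fin (n + 1) → ℂ) (i : Fin (n + 1)) :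
    (-N0 n + N1 n).mulVec v i =
      if h : (i : ℕ) < n then -v ⟨(i : ℕ) + 1, by omega⟩ else 0 := by
  have hrw : (-N0 n + N1 n).mulVec v i
      = ∑ j : Fin (n + 1), (if (i : ℕ) + 1 = (j : ℕ) then (-1 : ℂ) else 0) * v j := by
    simp only [Matrix.mulVec, dotProduct]
    exact Finset.sum_congr rfl fun j _ => by rw [Nentry]
  rw [hrw]
  split_ifs with h
  · rw [Finset.sum_eq_single (⟨(i : ℕ) + 1, by omega⟩ : Fin (n + 1))]
    · rw [if_pos rfl]; ring
    · intro j _ hj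
      rw [if_neg, zero_mul]
      intro hc; exact hj (Fin.ext hc.symm)
    · intro h'; exact absurd (Finset.mem_univ _) h'
  · apply Finset.sum_eq_zero
    intro j _
    have := j.is_lt
    rw [if_neg (by omega), zero_mul]

lemma span_apply_zero (n : ℕ) (a : ℕ → ℕ → ℂ) (K : ℤ) (v : Fin (n + 1) → ℂ)
    (hv : v ∈ Submodule.span ℂ {u | ∃ k : Fin (n + 1), K ≤ (k : ℕ) ∧ u = w n a k})
    (h0 : ∀ i : Fin (n + 1), K ≤ (i : ℕ) → v i = 0) : v = 0 := by
  have hset : {u | ∃ k : Fin (n + 1), K ≤ (k : ℕ) ∧ u = w n a k}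
      = Set.range (fun m : {m : Fin (n + 1) // K ≤ ((m : Fin (n + 1)) : ℕ)} => w n a m.val) := by
    ext u
    constructor
    · rintro ⟨k, hk, rfl⟩; exact ⟨⟨k, hk⟩, rfl⟩
    · rintro ⟨m, rfl⟩; exact ⟨m.1, m.2, rfl⟩
  rw [hset, Submodule.mem_span_range_iff_exists_fun] at hv
  obtain ⟨c, hc⟩ := hv
  have key : ∀ d : ℕ, ∀ m : {m : Fin (n + 1) // K ≤ ((m : Fin (n + 1)) : ℕ)},
      n - ((m : Fin (n + 1)) : ℕ) < d → c m = 0 := by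
    intro d
    induction d with
    | zero => intro m hm; omega
    | succ d ih =>
      intro m hm
      have hvm : v m.1 = 0 := h0 _ m.2
      rw [← hc] at hvm
      simp only [Finset.sum_apply, Pi.smul_apply] at hvm
      rw [Finset.sum_eq_single m] at hvm
      · simpa [w] using hvm
      · intro m' _ hne
        rcases lt_trichotomy ((m'.1 : ℕ)) ((m.1 : ℕ)) with hlt | heq | hgt
        · have hw : w n a m'.1 m.1 = 0 := by
            rw [w_apply, if_neg (by omega), if_neg (by omega)]
          rw [hw, smul_zero]
        · exact absurd (Subtype.ext (Fin.ext heq)) hne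
        · have h1 := m'.1.is_lt
          rw [ih m' (by omega), zero_smul]
      · intro h'; exact absurd (Finset.mem_univ _) h'
  have hall : ∀ m, c m = 0 := fun m => key (n + 1) m (by omega)
  rw [← hc]
  simp [hall]

/-- local condition -/
def Cond (n : ℕ) (a : ℕ → ℕ → ℂ) : Prop :=
  ∀ k i : ℕ, 1 ≤ k → k ≤ n → i + 1 < k → a (i + 1) k = a (i + 2) (k + 1)


lemma w_eq_one (n : ℕ) (a : ℕ → ℕ → ℂ) (k i : Fin (n + 1)) (h : (i : ℕ) = (k : ℕ)) :
    w n a k i = 1 := by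
  rw [w_apply, if_pos h]

lemma w_eq_a (n : ℕ) (a : ℕ → ℕ → ℂ) (k i : Fin (n + 1)) (h : (i : ℕ) < (k : ℕ)) :
    w n a k i = a ((i : ℕ) + 1) ((k : ℕ) + 1) := by
  rw [w_apply, if_neg (by omega), if_pos h]

lemma w_eq_zero (n : ℕ) (a : ℕ → ℕ → ℂ) (k i : Fin (n + 1)) (h : (k : ℕ) < (i : ℕ)) :
    w n a k i = 0 := by
  rw [w_apply, if_neg (by omega), if_neg (by omega)]

lemma Nw (n : ℕ) (a : ℕ → ℕ → ℂ) (hC : Cond n a) (k : Fin (n + 1)) (hk : 1 ≤ (k : ℕ)) :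
    (-N0 n + N1 n).mulVec (w n a k) = -(w n a ⟨(k : ℕ) - 1, by omega⟩) := by
  funext i
  have hkn := k.is_lt
  have hin := i.is_lt
  rw [Nmul, Pi.neg_apply]
  by_cases h : (i : ℕ) < n
  · rw [dif_pos h]
    rcases lt_trichotomy ((i : ℕ) + 1) ((k : ℕ)) with hlt | heq | hgt
    · rw [w_eq_a n a k ⟨(i : ℕ) + 1, by omega⟩ hlt,
        w_eq_a n a ⟨(k : ℕ) - 1, by omega⟩ i (by simp <;> omega)]
      show -a ((i : ℕ) + 1 + 1) ((k : ℕ) + 1) = -a ((i : ℕ) + 1) ((k : ℕ) - 1 + 1)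
      rw [show (k : ℕ) - 1 + 1 = (k : ℕ) by omega,
        hC (k : ℕ) (i : ℕ) hk (by omega) (by omega)]
    · rw [w_eq_one n a k ⟨(i : ℕ) + 1, by omega⟩ heq,
        w_eq_one n a ⟨(k : ℕ) - 1, by omega⟩ i (by simp <;> omega)]
    · rw [w_eq_zero n a k ⟨(i : ℕ) + 1, by omega⟩ (by simpa using hgt),
        w_eq_zero n a ⟨(k : ℕ) - 1, by omega⟩ i (by simp <;> omega)]
  · rw [dif_neg h, w_eq_zero n a ⟨(k : ℕ) - 1, by omega⟩ i (by simp <;> omega)]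
    simp

lemma cond_iff (n : ℕ) (hn : 1 ≤ n) (a : ℕ → ℕ → ℂ) :
    Cond n a ↔ (∀ k l : ℕ, 2 ≤ k → k < l → l ≤ n + 1 → a 1 k = a (l - k + 1) l) := by
  constructor
  · intro hC
    have aux : ∀ d k : ℕ, 2 ≤ k → 1 ≤ d → k + d ≤ n + 1 → a 1 k = a (d + 1) (k + d) := by
      intro d
      induction d with
      | zero => intro k _ h1 _; omega
      | succ d ih =>
        intro k h2 _ hkd
        rcases Nat.eq_zero_or_pos d with hd | hd
        · subst hd
          have := hC k 0 (by omega) (by omega) (by omega)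
          simpa using this
        · have e1 := ih k h2 hd (by omega)
          have e2 := hC (k + d) d (by omega) (by omega) (by omega)
          rw [e1, show d + 1 = d + 1 from rfl]
          rw [show k + (d + 1) = k + d + 1 by omega, ← e2]
    intro k l h2 hkl hl
    have := aux (l - k) k h2 (by omega) (by omega)
    rwa [show k + (l - k) = l by omega, show l - k + 1 = l - k + 1 from rfl] at this
  · intro hG k i h1 h2 h3
    by_cases hi : i = 0
    · subst hi
      have := hG k (k + 1) (by omega) (by omega) (by omega)
      rwa [show k + 1 - k + 1 = 2 by omega] at this
    · have e1 := hG (k - i) k (by omega) (by omega) (by omega)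
      have e2 := hG (k - i) (k + 1) (by omega) (by omega) (by omega)
      rw [show k - (k - i) + 1 = i + 1 by omega] at e1
      rw [show k + 1 - (k - i) + 1 = i + 2 by omega] at e2
      rw [← e1, e2]

/-- `(-N₀ + N₁, F)` satisfies Griffiths transversality iff
`a_{1,k} = a_{l-k+1,l}` for `2 ≤ k < l ≤ n+1`. -/
theorem griffiths_transversality_neg_N0_add_N1_iff (n : ℕ) (hn : 1 ≤ n) (a : ℕ → ℕ → ℂ) :
    GriffithsTransversal n (-N0 n + N1 n) a ↔
      (∀ k l : ℕ, 2 ≤ k → k < l → l ≤ n + 1 → a 1 k = a (l - k + 1) l) := by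
  rw [← cond_iff n hn a]
  constructor
  · intro hGT k i h1 h2 h3
    set kf : Fin (n + 1) := ⟨k, by omega⟩ with hkf
    have hp : ¬ (1 : ℤ) ≤ (k : ℤ) - n := by omega
    have hp' : ¬ (1 : ℤ) ≤ (k : ℤ) - n - 1 := by omega
    have h1' : w n a kf ∈ Filt n a ((k : ℤ) - n) := by
      simp only [Filt, if_neg hp]
      exact Submodule.subset_span ⟨kf, by simp [hkf] <;> omega, rfl⟩
    have h2' := hGT ((k : ℤ) - n) (w n a kf) h1'
    simp only [Filt, if_neg (show ¬ (1 : ℤ) ≤ (k : ℤ) - n - 1 by omega)] at h2'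
    have hmem : (-N0 n + N1 n).mulVec (w n a kf) + w n a ⟨k - 1, by omega⟩ ∈
        Submodule.span ℂ {v | ∃ k' : Fin (n + 1), (n : ℤ) + ((k : ℤ) - n - 1) ≤ (k' : ℕ) ∧
          v = w n a k'} := by
      exact Submodule.add_mem _ h2' (Submodule.subset_span ⟨⟨k - 1, by omega⟩, by simp <;> omega, rfl⟩)
    have hzero := span_apply_zero n a ((n : ℤ) + ((k : ℤ) - n - 1)) _ hmem ?_
    · have := congrFun hzero ⟨i, by omega⟩
      rw [Pi.add_apply, Nmul, dif_pos (show (i : ℕ) < n by omega)] at this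
      rw [w_eq_a n a kf ⟨i + 1, by omega⟩ (by simp [hkf] <;> omega)] at this
      rw [w_eq_a n a ⟨k - 1, by omega⟩ ⟨i, by omega⟩ (by simp <;> omega)] at this
      have this2 : -a (i + 1 + 1) (k + 1) + a (i + 1) (k - 1 + 1) = 0 := this
      rw [show k - 1 + 1 = k by omega] at this2
      rw [show i + 2 = i + 1 + 1 from rfl]
      linear_combination this2
    · intro j hj
      have hjk : k - 1 ≤ (j : ℕ) := by omega
      have hjn := j.is_lt
      rw [Pi.add_apply, Nmul]
      rcases Nat.lt_or_ge ((j : ℕ)) k with hjlt | hjge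
      · -- j = k - 1
        have hje : (j : ℕ) = k - 1 := by omega
        rw [dif_pos (show (j : ℕ) < n by omega)]
        rw [w_eq_one n a kf ⟨(j : ℕ) + 1, by omega⟩ (by simp [hkf] <;> omega)]
        rw [w_eq_one n a ⟨k - 1, by omega⟩ j (by simp <;> omega)]
        ring
      · -- j ≥ k
        rw [w_eq_zero n a ⟨k - 1, by omega⟩ j (by simp <;> omega)]
        split_ifs with hjlt2
        · rw [w_eq_zero n a kf ⟨(j : ℕ) + 1, by omega⟩ (by simp [hkf] <;> omega)]
          ring
        · ring
  · intro hC p v hv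
    by_cases hp : 1 ≤ p
    · simp only [Filt, if_pos hp, Submodule.mem_bot] at hv
      rw [hv, Matrix.mulVec_zero]
      exact Submodule.zero_mem _
    · have hp' : ¬ (1 : ℤ) ≤ p - 1 := by omega
      simp only [Filt, if_neg hp] at hv
      simp only [Filt, if_neg hp']
      induction hv using Submodule.span_induction with
      | mem x hx =>
        obtain ⟨kk, hkk, rfl⟩ := hx
        by_cases hk0 : (kk : ℕ) = 0
        · have hz : (-N0 n + N1 n).mulVec (w n a kk) = 0 := by
            funext j
            rw [Nmul]
            split_ifs with hj
            · rw [w_eq_zero n a kk ⟨(j : ℕ) + 1, by omega⟩ (by simp <;> omega)]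
              simp
            · rfl
          rw [hz]
          exact Submodule.zero_mem _
        · rw [Nw n a hC kk (by omega)]
          refine Submodule.neg_mem _ (Submodule.subset_span
            ⟨⟨(kk : ℕ) - 1, by omega⟩, ?_, rfl⟩)
          have := kk.is_lt
          simp only []
          push_cast
          omega
      | zero => rw [Matrix.mulVec_zero]; exact Submodule.zero_mem _
      | add x y hx hy ihx ihy => rw [Matrix.mulVec_add]; exact Submodule.add_mem _ ihx ihy
      | smul c x hx ihx => rw [Matrix.mulVec_smul]; exact Submodule.smul_mem _ _ ihx
end
end

section
/- As x → 0 along real x ∈ (0,1), the matrix exp(−(2πi)^{−1} log(x) · N_0) · M(x) converges to the identity matrix I, where exp is the matrix exponential. -/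
open Complex

noncomputable section

/-- `ad N₀` acting on matrices: `(ad N₀)(M) = N₀ M - M N₀`. -/
def adN0 (n : ℕ) : Matrix (Fin (n + 1)) (Fin (n + 1)) ℂ → Matrix (Fin (n + 1)) (Fin (n + 1)) ℂ :=
  fun M => N0 n * M - M * N0 n

/-- The polylogarithm `Li_j(x) = ∑_{k≥1} x^k / k^j`, for `|x| < 1`. -/
def Li (j : ℕ) (x : ℂ) : ℂ := ∑' k : ℕ, x ^ (k + 1) / ((k : ℂ) + 1) ^ j

/-- The slit open unit disc `U = {x : |x| < 1, x ∉ ℝ_{≤0}}`. -/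
def U : Set ℂ := {x | ‖x‖ < 1 ∧ ¬(x.im = 0 ∧ x.re ≤ 0)}

/-- The matrix `M(x)` of solutions (0-based indices): diagonal entries `1`,
`M(x)_{i,j} = ((2πi)⁻¹ log x)^{j-i}/(j-i)!` for `i < j < n` (paper: `1 ≤ j < k ≤ n`),
`M(x)_{i,n} = -(2πi)^{-(n-i)} Li_{n-i}(x)` for `i < n` (paper: `M_{j,n+1}`, `1 ≤ j ≤ n`). -/
def Mmat (n : ℕ) (x : ℂ) : Matrix (Fin (n + 1)) (Fin (n + 1)) ℂ := fun i j =>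
  if i = j then 1
  else if (i : ℕ) < (j : ℕ) ∧ (j : ℕ) < n then
    ((2 * (Real.pi : ℂ) * I)⁻¹ * Complex.log x) ^ ((j : ℕ) - (i : ℕ)) / ((j : ℕ) - (i : ℕ)).factorial
  else if (i : ℕ) < (j : ℕ) ∧ (j : ℕ) = n then
    -((2 * (Real.pi : ℂ) * I)⁻¹) ^ (n - (i : ℕ)) * Li (n - (i : ℕ)) x
  else 0

/-! Writing `b(x) = (2πi)⁻¹ log x`, the matrix `M(x)` is `exp (b(x) • N₀)` plus a last column `D(x)`
of polylogarithms, so `exp (-b(x) • N₀) * M(x) = 1 + exp (-b(x) • N₀) * D(x)`. As `N₀` is nilpotent,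
`exp (-b(x) • N₀)` is a polynomial in `log x`, and `(log x) ^ m * Li_j(x) → 0` because
`‖Li_j(x)‖ ≤ x / (1 - x)` and `(log x) ^ m * x → 0`. -/

open Filter Topology Finset

theorem NormedSpace.exp_eq_sum_of_pow_eq_zero {𝕂 𝔸 : Type*} [Field 𝕂] [CharZero 𝕂] [Ring 𝔸]
    [Algebra 𝕂 𝔸] [TopologicalSpace 𝔸] [IsTopologicalRing 𝔸] {a : 𝔸} {k : ℕ} (h : a ^ k = 0) :
    NormedSpace.exp a = ∑ i ∈ range k, (i.factorial⁻¹ : 𝕂) • a ^ i := by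
  rw [NormedSpace.exp_eq_tsum 𝕂]
  exact tsum_eq_sum fun i hi => by
    rw [pow_eq_zero_of_le (by simpa using hi) h, smul_zero]

theorem tendsto_exp_smul_mul_of_isNilpotent {α 𝔸 : Type*} [Ring 𝔸] [Algebra ℂ 𝔸]
    [TopologicalSpace 𝔸] [IsTopologicalRing 𝔸] [ContinuousConstSMul ℂ 𝔸]
    {a : 𝔸} (ha : IsNilpotent a) {l : Filter α} {f : α → ℂ} {g : α → 𝔸}
    (hg : ∀ m : ℕ, Tendsto (fun t => f t ^ m • g t) l (𝓝 0)) :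
    Tendsto (fun t => NormedSpace.exp (f t • a) * g t) l (𝓝 0) := by
  obtain ⟨k, hk⟩ := ha
  have hsum : ∀ t, NormedSpace.exp (f t • a) * g t =
      ∑ i ∈ range k, (i.factorial⁻¹ : ℂ) • (a ^ i * (f t ^ i • g t)) := fun t => by
    rw [NormedSpace.exp_eq_sum_of_pow_eq_zero (𝕂 := ℂ) (by rw [smul_pow, hk, smul_zero]),
      sum_mul]
    refine sum_congr rfl fun i _ => ?_
    rw [smul_pow, smul_mul_assoc, smul_mul_assoc, mul_smul_comm]
  simp only [hsum]
  simpa using tendsto_finsetSum (range k) fun i _ =>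
    ((hg i).const_mul (a ^ i)).const_smul (i.factorial⁻¹ : ℂ)

theorem N0_pow_apply (n m : ℕ) (i j : Fin (n + 1)) :
    (N0 n ^ m) i j = if (i : ℕ) + m = j ∧ ((j : ℕ) < n ∨ m = 0) then 1 else 0 := by
  induction m generalizing j with
  | zero => simp [Matrix.one_apply, Fin.ext_iff]
  | succ m ih =>
    rw [pow_succ, Matrix.mul_apply]
    by_cases h : (i : ℕ) + (m + 1) = j ∧ (j : ℕ) < n
    · rw [if_pos ⟨h.1, Or.inl h.2⟩, sum_eq_single ⟨(i : ℕ) + m, by omega⟩]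
      · simp only [ih, N0]
        rw [if_pos (by simp only [true_and]; omega), if_pos (by omega), one_mul]
      · intro k _ hk
        simp only [ih, N0, mul_ite, ite_mul, one_mul, zero_mul, mul_zero]
        split_ifs <;> first | rfl | exact absurd (Fin.ext (by simp only; omega)) hk
      · simp
    · rw [if_neg (by omega)]
      refine sum_eq_zero fun k _ => ?_
      simp only [ih, N0]
      split_ifs <;> first | omega | simp

theorem N0_pow_succ_self (n : ℕ) : N0 n ^ (n + 1) = 0 := by
  ext i j
  rw [N0_pow_apply, if_neg (by omega), Matrix.zero_apply]

theorem exp_smul_N0_apply (n : ℕ) (b : ℂ) (i j : Fin (n + 1)) :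
    NormedSpace.exp (b • N0 n) i j =
      if (i : ℕ) ≤ j ∧ ((j : ℕ) < n ∨ (i : ℕ) = j) then
        b ^ ((j : ℕ) - i) / ((j : ℕ) - i).factorial else 0 := by
  rw [NormedSpace.exp_eq_sum_of_pow_eq_zero (𝕂 := ℂ)
    (by rw [smul_pow, N0_pow_succ_self, smul_zero]), Matrix.sum_apply]
  simp only [smul_pow, Matrix.smul_apply, N0_pow_apply, smul_eq_mul, mul_ite, mul_one, mul_zero]
  split_ifs with h
  · rw [sum_eq_single ((j : ℕ) - i), if_pos (by omega), div_eq_inv_mul]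
    · exact fun m _ hm => if_neg (by omega)
    · exact fun hm => absurd (mem_range.2 (by omega)) hm
  · exact sum_eq_zero fun m _ => if_neg (by omega)

theorem norm_Li_le (j : ℕ) {x : ℂ} (hx : ‖x‖ < 1) : ‖Li j x‖ ≤ ‖x‖ / (1 - ‖x‖) := by
  have hgeom : HasSum (fun k : ℕ => ‖x‖ ^ (k + 1)) (‖x‖ / (1 - ‖x‖)) := by
    simpa [pow_succ', div_eq_mul_inv] using
      (hasSum_geometric_of_lt_one (norm_nonneg x) hx).mul_left ‖x‖
  refine tsum_of_norm_bounded hgeom fun k => ?_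
  have hk : 1 ≤ ‖((k : ℂ) + 1) ^ j‖ := by
    rw [norm_pow]
    exact one_le_pow₀ (by rw [← Nat.cast_succ, Complex.norm_natCast]; simp)
  rw [norm_div, ← norm_pow]
  exact div_le_self (norm_nonneg _) hk

theorem tendsto_neg_log_pow_mul_nhdsGT_zero (m : ℕ) :
    Tendsto (fun t : ℝ => (-Real.log t) ^ m * t) (𝓝[>] 0) (𝓝 0) := by
  refine ((Real.tendsto_pow_mul_exp_neg_atTop_nhds_zero m).comp
    (tendsto_neg_atBot_atTop.comp Real.tendsto_log_nhdsGT_zero)).congr' ?_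
  filter_upwards [self_mem_nhdsWithin] with t ht
  simp [Real.exp_log ht]

theorem tendsto_log_pow_mul_Li (m j : ℕ) :
    Tendsto (fun t : ℝ => Complex.log t ^ m * Li j t) (𝓝[>] 0) (𝓝 0) := by
  have hbound : Tendsto (fun t : ℝ => (-Real.log t) ^ m * t * (1 - t)⁻¹) (𝓝[>] 0) (𝓝 0) := by
    simpa using (tendsto_neg_log_pow_mul_nhdsGT_zero m).mul
      ((tendsto_const_nhds.sub tendsto_id).inv₀ (by norm_num) |>.mono_left nhdsWithin_le_nhds)
  refine squeeze_zero_norm' ?_ hbound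
  filter_upwards [Ioo_mem_nhdsGT zero_lt_one] with t ⟨ht0, ht1⟩
  have hnorm : ‖(t : ℂ)‖ = t := by simp [abs_of_pos ht0]
  have hlog : ‖Complex.log t‖ = -Real.log t := by
    rw [← Complex.ofReal_log ht0.le, Complex.norm_real, Real.norm_eq_abs,
      abs_of_nonpos (Real.log_nonpos ht0.le ht1.le)]
  rw [norm_mul, norm_pow, hlog, mul_assoc, ← div_eq_mul_inv]
  gcongr
  · exact pow_nonneg (neg_nonneg.2 (Real.log_nonpos ht0.le ht1.le)) m
  · simpa only [hnorm] using norm_Li_le j (x := t) (by rwa [hnorm])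

def polylogColumn (n : ℕ) (x : ℂ) : Matrix (Fin (n + 1)) (Fin (n + 1)) ℂ := fun i j =>
  if (i : ℕ) < n ∧ (j : ℕ) = n then
    -((2 * (Real.pi : ℂ) * I)⁻¹) ^ (n - (i : ℕ)) * Li (n - (i : ℕ)) x else 0

theorem Mmat_eq_exp_add_polylogColumn (n : ℕ) (x : ℂ) :
    Mmat n x =
      NormedSpace.exp (((2 * (Real.pi : ℂ) * I)⁻¹ * Complex.log x) • N0 n) +
        polylogColumn n x := by
  ext i j
  rw [Matrix.add_apply, exp_smul_N0_apply, Mmat, polylogColumn]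
  split_ifs <;> first | omega | simp_all [Fin.ext_iff]

theorem tendsto_log_pow_smul_polylogColumn (n : ℕ) (c : ℂ) (m : ℕ) :
    Tendsto (fun t : ℝ => (c * Complex.log t) ^ m • polylogColumn n t) (𝓝[>] 0) (𝓝 0) := by
  refine tendsto_pi_nhds.2 fun i => tendsto_pi_nhds.2 fun j => ?_
  simp only [Matrix.smul_apply, polylogColumn, smul_eq_mul, Matrix.zero_apply]
  split_ifs
  · simpa [mul_pow, mul_mul_mul_comm] using
      (tendsto_log_pow_mul_Li m (n - i)).const_mul
        (c ^ m * -((2 * (Real.pi : ℂ) * I)⁻¹) ^ (n - (i : ℕ)))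
  · simp

theorem tendsto_exp_neg_log_N0_mul_Mmat_general (n : ℕ) :
    Filter.Tendsto
      (fun t : ℝ =>
        NormedSpace.exp ((-((2 * (Real.pi : ℂ) * I)⁻¹ * Complex.log (t : ℂ))) • N0 n) *
          Mmat n (t : ℂ))
      (nhdsWithin 0 (Set.Ioo 0 1)) (nhds 1) := by
  set b : ℂ → ℂ := fun x => (2 * (Real.pi : ℂ) * I)⁻¹ * Complex.log x
  have hN0 : IsNilpotent (N0 n) := ⟨n + 1, N0_pow_succ_self n⟩
  have hD : Tendsto (fun t : ℝ => NormedSpace.exp (-b t • N0 n) * polylogColumn n t)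
      (𝓝[>] 0) (𝓝 0) :=
    tendsto_exp_smul_mul_of_isNilpotent hN0 fun m => by
      simpa only [b, neg_mul] using
        tendsto_log_pow_smul_polylogColumn n (-(2 * (Real.pi : ℂ) * I)⁻¹) m
  have hprod : ∀ x : ℂ, NormedSpace.exp (-b x • N0 n) * Mmat n x =
      1 + NormedSpace.exp (-b x • N0 n) * polylogColumn n x := fun x => by
    rw [Mmat_eq_exp_add_polylogColumn, mul_add, ← Matrix.exp_add_of_commute, neg_smul,
      neg_add_cancel, NormedSpace.exp_zero]
    exact ((Commute.refl _).smul_left _).smul_right _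
  have h := (hD.const_add 1).mono_left
    (nhdsWithin_mono 0 (Set.Ioo_subset_Ioi_self : Set.Ioo (0 : ℝ) 1 ⊆ _))
  rw [add_zero] at h
  exact h.congr fun t => (hprod t).symm

/-- As `x → 0` along real `x ∈ (0,1)`,
`exp(-(2πi)⁻¹ log(x) · N₀) · M(x)` converges to the identity matrix. -/
theorem tendsto_exp_neg_log_N0_mul_Mmat (n : ℕ) (hn : 1 ≤ n) :
    Filter.Tendsto
      (fun t : ℝ =>
        NormedSpace.exp ((-((2 * (Real.pi : ℂ) * I)⁻¹ * Complex.log (t : ℂ))) • N0 n) *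
          Mmat n (t : ℂ))
      (nhdsWithin 0 (Set.Ioo 0 1)) (nhds 1) :=
  tendsto_exp_neg_log_N0_mul_Mmat_general n
end
end
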